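/- G_{f₀} has sensitive dependence on initial conditions on (𝒳,d) with sensitivity constant N/2: there exists δ = N/2 > 0 such that for every x ∈ 𝒳 and every neighborhood V of x, there are y ∈ V and n ≥ 0 with d(G_{f₀}^n(x), G_{f₀}^n(y)) > δ... (for N ≥ 2, one may take δ = 1). -/

import Mathlib

/-!
Keep the strategy up to time m, which costs at most 10⁻ᵐ in `ds`, and then play `cids q` for N
steps. During those steps a coordinate u ≠ 0 is flipped exactly once if q u holds and never
otherwise, so q can be chosen to make the two states differ at every u ≠ 0 at time m + N.
Coordinate 0 cannot be controlled this way, but parity takes care of it: each step flips one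
bit in each orbit, so two orbits starting from the same state are always at even Hamming
distance. An even number that is at least N - 1 exceeds N / 2 when N ≥ 2.
-/

open scoped BigOperators
open MeasureTheory ProbabilityTheory

namespace CI

/-- Strategies: sequences with values in {1,…,N}, encoded as `Fin N`. -/
abbrev Strat (N : ℕ) := ℕ → Fin N
/-- States of the system: boolean vectors of length N. -/
abbrev CState (N : ℕ) := Fin N → Bool
/-- The phase space 𝒳 = {1,…,N}^ℕ × 𝔹^N. -/
abbrev Pt (N : ℕ) := Strat N × CState N

/-- d_e : sum of the discrete metric over the coordinates. -/
noncomputable def de {N : ℕ} (E F : CState N) : ℝ :=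
  ∑ k : Fin N, if E k = F k then (0 : ℝ) else 1

/-- d_s(S,Š) = (9/N) Σ_{k≥1} |S^k − Š^k| / 10^k  (indices shifted to start at 0). -/
noncomputable def ds (N : ℕ) (S T : Strat N) : ℝ :=
  (9 / N) * ∑' k : ℕ, |((S k : ℝ)) - ((T k : ℝ))| / 10 ^ (k + 1)

/-- The distance d = d_e + d_s on 𝒳. -/
noncomputable def dC {N : ℕ} (p q : Pt N) : ℝ := de p.2 q.2 + ds N p.1 q.1

/-- Flip bit k of the state E. -/
def bflip {N : ℕ} (k : Fin N) (E : CState N) : CState N :=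
  fun j => if j = k then !(E j) else E j

/-- F_f(k,E): equal to E except possibly in coordinate k, where it is f(E)_k. -/
def Ff {N : ℕ} (f : CState N → CState N) (k : Fin N) (E : CState N) : CState N :=
  fun j => if j = k then f E k else E j

/-- The chaotic-iterations map G_f(S,E) = (σ(S), F_f(S^0,E)). -/
def Gf {N : ℕ} (f : CState N → CState N) (p : Pt N) : Pt N :=
  (fun n => p.1 (n + 1), Ff f (p.1 0) p.2)

/-- The vectorial negation f₀. -/
def f0 {N : ℕ} (E : CState N) : CState N := fun j => !(E j)

/-- G_{f₀}. -/
def G0 {N : ℕ} : Pt N → Pt N := Gf f0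

/-- Open ball for the distance dC. -/
def ballC {N : ℕ} (x : Pt N) (r : ℝ) : Set (Pt N) := {y | dC x y < r}

/-- Open sets of the metric space (𝒳,d). -/
def IsOpenC {N : ℕ} (U : Set (Pt N)) : Prop := ∀ x ∈ U, ∃ ε > 0, ballC x ε ⊆ U

/-- Iterating the flip-one-coordinate dynamics along a strategy. -/
def runCI {N : ℕ} (S : ℕ → Fin N) (E : CState N) : ℕ → CState N
  | 0 => E
  | n + 1 => bflip (S n) (runCI S E n)

/-- The CIDS (cover-dependent) strategy: S^k = k if k ≤ N and X_k = 1, else S^k = 1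
(indices encoded from 0, so "1" is `0 : Fin N`). -/
def cids {N : ℕ} [NeZero N] (X : CState N) : ℕ → Fin N :=
  fun k => if h : k < N then (if X ⟨k, h⟩ then ⟨k, h⟩ else 0) else 0


lemma runCI_add {N : ℕ} (S : Strat N) (E : CState N) (m k : ℕ) :
    runCI S E (m + k) = runCI (fun i => S (m + i)) (runCI S E m) k := by
  induction k with
  | zero => rfl
  | succ k ih => rw [← Nat.add_assoc, runCI, runCI, ih]

lemma runCI_congr {N : ℕ} {S T : Strat N} {n : ℕ} (hST : ∀ i < n, S i = T i) (E : CState N) :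
    runCI S E n = runCI T E n := by
  induction n with
  | zero => rfl
  | succ n ih =>
    rw [runCI, runCI, hST n n.lt_succ_self, ih fun i hi => hST i (hi.trans n.lt_succ_self)]

lemma G0_apply {N : ℕ} (S : Strat N) (E : CState N) :
    G0 (S, E) = (fun k => S (k + 1), bflip (S 0) E) := by
  refine Prod.ext rfl (funext fun j => ?_)
  by_cases hj : j = S 0
  · subst hj; simp [G0, Gf, Ff, f0, bflip]
  · simp [G0, Gf, Ff, bflip, hj]

lemma G0_iterate {N : ℕ} (S : Strat N) (E : CState N) (n : ℕ) :
    G0^[n] (S, E) = (fun k => S (k + n), runCI S E n) := by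
  induction n with
  | zero => rfl
  | succ n ih =>
    rw [Function.iterate_succ_apply', ih, G0_apply, zero_add, runCI]
    exact Prod.ext (funext fun k => congrArg S (by omega)) rfl

lemma cids_eq_iff {N : ℕ} [NeZero N] (X : CState N) {u : Fin N} (hu : u ≠ 0) {n : ℕ}
    (hn : n < N) : cids X n = u ↔ n = u ∧ X u = true := by
  simp only [cids, dif_pos hn]
  split_ifs with hX
  · constructor
    · rintro rfl; exact ⟨rfl, hX⟩
    · rintro ⟨rfl, -⟩; rfl
  · constructor
    · rintro rfl; exact absurd rfl hu
    · rintro ⟨rfl, h⟩; exact absurd h hX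

lemma runCI_cids_of_ne_zero_of_le {N : ℕ} [NeZero N] (X E : CState N) {u : Fin N} (hu : u ≠ 0)
    {n : ℕ} (hn : n ≤ N) : runCI (cids X) E n u = if (u : ℕ) < n then (X u ^^ E u) else E u := by
  induction n with
  | zero => simp [runCI]
  | succ n ih =>
    simp only [runCI, bflip, ih (by omega), eq_comm (a := u), cids_eq_iff X hu (by omega : n < N)]
    by_cases hun : (u : ℕ) = n
    · cases X u <;> simp [hun]
    · have : (u : ℕ) < n + 1 ↔ (u : ℕ) < n := by omega
      simp [this, Ne.symm hun]

lemma runCI_cids_of_ne_zero {N : ℕ} [NeZero N] (X E : CState N) {u : Fin N} (hu : u ≠ 0) :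
    runCI (cids X) E N u = (X u ^^ E u) := by
  simp [runCI_cids_of_ne_zero_of_le X E hu le_rfl]

lemma even_hammingDist_bflip_left_iff {N : ℕ} (k : Fin N) (X Y : CState N) :
    Even (hammingDist (bflip k X) Y) ↔ ¬Even (hammingDist X Y) := by
  have hsplit : ∀ Z : CState N, hammingDist Z Y = (if Z k ≠ Y k then 1 else 0) +
      ∑ i ∈ Finset.univ.erase k, if Z i ≠ Y i then 1 else 0 := fun Z => by
    rw [hammingDist, Finset.card_filter, ← Finset.add_sum_erase _ _ (Finset.mem_univ k)]
  have hrest : ∑ i ∈ Finset.univ.erase k, (if bflip k X i ≠ Y i then 1 else 0) =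
      ∑ i ∈ Finset.univ.erase k, if X i ≠ Y i then 1 else 0 :=
    Finset.sum_congr rfl fun i hi => by simp [bflip, Finset.ne_of_mem_erase hi]
  have hk : bflip k X k = !X k := by simp [bflip]
  rw [hsplit, hsplit X, hrest, hk]
  cases X k <;> cases Y k <;> simp [parity_simps]

lemma even_hammingDist_runCI_iff {N : ℕ} (S T : Strat N) (X Y : CState N) (n : ℕ) :
    Even (hammingDist (runCI S X n) (runCI T Y n)) ↔ Even (hammingDist X Y) := by
  induction n with
  | zero => rfl
  | succ n ih =>
    rw [runCI, runCI, even_hammingDist_bflip_left_iff, hammingDist_comm,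
      even_hammingDist_bflip_left_iff, hammingDist_comm, not_not, ih]

lemma card_le_hammingDist_add_one {ι : Type*} [Fintype ι] [DecidableEq ι] {β : ι → Type*}
    [∀ i, DecidableEq (β i)] {x y : ∀ i, β i} (i₀ : ι) (h : ∀ i ≠ i₀, x i ≠ y i) :
    Fintype.card ι ≤ hammingDist x y + 1 := by
  have : Finset.univ.erase i₀ ⊆ Finset.univ.filter fun i => x i ≠ y i := fun i hi =>
    Finset.mem_filter.2 ⟨Finset.mem_univ i, h i (Finset.ne_of_mem_erase hi)⟩
  have := Finset.card_le_card this
  rw [Finset.card_erase_of_mem (Finset.mem_univ i₀), Finset.card_univ] at this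
  rw [hammingDist]
  omega

lemma lt_two_mul_hammingDist_runCI {N : ℕ} (hN : 2 ≤ N) {S T : Strat N} {E : CState N} {n : ℕ}
    (i₀ : Fin N) (h : ∀ i ≠ i₀, runCI S E n i ≠ runCI T E n i) :
    N < 2 * hammingDist (runCI S E n) (runCI T E n) := by
  obtain ⟨r, hr⟩ := (even_hammingDist_runCI_iff S T E E n).2 (by simp)
  have hcard := card_le_hammingDist_add_one i₀ h
  rw [Fintype.card_fin] at hcard
  omega

lemma exists_eq_of_lt_runCI_ne {N : ℕ} [NeZero N] (S : Strat N) (E : CState N) (m : ℕ) :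
    ∃ T : Strat N, (∀ i < m, S i = T i) ∧ ∀ u ≠ 0, runCI S E (m + N) u ≠ runCI T E (m + N) u := by
  set Z := runCI S E m
  set X := runCI S E (m + N)
  set q : CState N := fun u => X u == Z u
  set T : Strat N := fun i => if i < m then S i else cids q (i - m)
  have hST : ∀ i < m, S i = T i := fun i hi => by simp [T, hi]
  have hY : runCI T E (m + N) = runCI (cids q) Z N := by
    rw [runCI_add, ← runCI_congr hST]
    congr 1
    funext i
    simp [T]
  refine ⟨T, hST, fun u hu => ?_⟩
  rw [hY, runCI_cids_of_ne_zero q Z hu]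
  simp only [q]
  cases X u <;> cases Z u <;> decide

lemma de_eq_hammingDist {N : ℕ} (X Y : CState N) : de X Y = hammingDist X Y := by
  rw [de, hammingDist, Finset.card_filter]
  push_cast
  exact Finset.sum_congr rfl fun j _ => by by_cases h : X j = Y j <;> simp [h]

lemma ds_nonneg {N : ℕ} (S T : Strat N) : 0 ≤ ds N S T :=
  mul_nonneg (by positivity) (tsum_nonneg fun _ => by positivity)

lemma ds_le_of_eq_of_lt {N : ℕ} {S T : Strat N} {m : ℕ} (hST : ∀ k < m, S k = T k) :
    ds N S T ≤ (1 / 10) ^ m := by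
  obtain rfl | hN := Nat.eq_zero_or_pos N
  · simp [ds]
  set f : ℕ → ℝ := fun k => |(S k : ℝ) - T k| / 10 ^ (k + 1)
  have hf_le : ∀ k, f k ≤ N / 10 * (1 / 10) ^ k := fun k => by
    have hS : (S k : ℝ) < N := by exact_mod_cast (S k).isLt
    have hT : (T k : ℝ) < N := by exact_mod_cast (T k).isLt
    have hdiff : |(S k : ℝ) - T k| ≤ N :=
      abs_sub_le_iff.2 ⟨by linarith [(T k : ℕ).cast_nonneg (α := ℝ)],
        by linarith [(S k : ℕ).cast_nonneg (α := ℝ)]⟩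
    calc f k ≤ N / 10 ^ (k + 1) := div_le_div_of_nonneg_right hdiff (by positivity)
      _ = N / 10 * (1 / 10) ^ k := by rw [one_div, inv_pow, pow_succ]; field_simp
  have hgeom : Summable fun k : ℕ => (N : ℝ) / 10 * (1 / 10) ^ k :=
    (summable_geometric_of_lt_one (by norm_num) (by norm_num)).mul_left _
  have hf : Summable f := hgeom.of_nonneg_of_le (fun k => by positivity) hf_le
  have hhead : ∑ k ∈ Finset.range m, f k = 0 :=
    Finset.sum_eq_zero fun k hk => by
      simp only [f, hST k (Finset.mem_range.1 hk), sub_self, abs_zero, zero_div]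
  have htail : ∑' i, f (i + m) ≤ ∑' i, (N : ℝ) / 10 * (1 / 10) ^ m * (1 / 10) ^ i := by
    refine Summable.tsum_le_tsum (fun i => ?_) ((summable_nat_add_iff m).2 hf)
      ((summable_geometric_of_lt_one (by norm_num) (by norm_num)).mul_left _)
    rw [mul_assoc, ← pow_add, add_comm m]
    exact hf_le (i + m)
  rw [tsum_mul_left, tsum_geometric_of_lt_one (by norm_num) (by norm_num)] at htail
  calc ds N S T = 9 / N * ∑' i, f (i + m) := by
        rw [ds, ← hf.sum_add_tsum_nat_add m, hhead, zero_add]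
    _ ≤ 9 / N * ((N : ℝ) / 10 * (1 / 10) ^ m * (1 - 1 / 10)⁻¹) := by gcongr
    _ = (1 / 10) ^ m := by field_simp; norm_num

lemma de_le_dC {N : ℕ} (p q : Pt N) : de p.2 q.2 ≤ dC p q :=
  le_add_of_nonneg_right (ds_nonneg _ _)

theorem stmt13 {N : ℕ} (hN : 2 ≤ N) :
    ∀ x : Pt N, ∀ ε > (0 : ℝ), ∃ y : Pt N, dC x y < ε ∧
      ∃ n : ℕ, (N : ℝ) / 2 < dC (G0^[n] x) (G0^[n] y) := by
  have : NeZero N := ⟨by omega⟩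
  rintro ⟨S, E⟩ ε hε
  obtain ⟨m, hm⟩ := exists_pow_lt_of_lt_one hε (by norm_num : (1 / 10 : ℝ) < 1)
  obtain ⟨T, hST, hne⟩ := exists_eq_of_lt_runCI_ne S E m
  refine ⟨(T, E), ?_, m + N, ?_⟩
  · calc dC (S, E) (T, E) = ds N S T := by simp [dC, de]
      _ ≤ (1 / 10) ^ m := ds_le_of_eq_of_lt hST
      _ < ε := hm
  · rw [G0_iterate, G0_iterate]
    refine lt_of_lt_of_le ?_ (de_le_dC _ _)
    rw [de_eq_hammingDist, div_lt_iff₀ two_pos, mul_comm]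
    exact_mod_cast lt_two_mul_hammingDist_runCI hN 0 hne

end CI
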